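/- Let L be a De Morgan lattice and define the relation θ on L by: a θ b if and only if there exists f ∈ F_comp with a ⊓ f = b ⊓ f and ¬f ⊔ a = ¬f ⊔ b. Then θ is a congruence on L; ((x ⊓ ¬x) ⊓ (y ⊔ ¬y)) θ (x ⊓ ¬x) holds for all x, y ∈ L; and θ is contained in every congruence θ' on L satisfying ((x ⊓ ¬x) ⊓ (y ⊔ ¬y)) θ' (x ⊓ ¬x) for all x, y ∈ L. (That is, θ is the smallest congruence on L whose quotient is a Kleene lattice.) -/

import Mathlib

/-- A De Morgan lattice: a distributive lattice with an antitone involution. -/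
class DeMorgan (L : Type*) extends DistribLattice L where
  dneg : L → L
  dneg_dneg : ∀ x : L, dneg (dneg x) = x
  dneg_sup : ∀ x y : L, dneg (x ⊔ y) = dneg x ⊓ dneg y

prefix:max "∼" => DeMorgan.dneg

section Defs

variable {α : Type*}

/-- An upward closed subset of a lattice. -/
def IsUpset [Lattice α] (F : Set α) : Prop :=
  ∀ ⦃x y : α⦄, x ∈ F → x ≤ y → y ∈ F

/-- A lattice filter: an upset closed under binary meets. -/
def IsLatFilter [Lattice α] (F : Set α) : Prop :=
  IsUpset F ∧ ∀ x y : α, x ∈ F → y ∈ F → x ⊓ y ∈ F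

/-- An `n`-filter: an upset such that for every nonempty finite `Y`, if the meet of
every nonempty subset of `Y` of size at most `n` lies in `F`, then so does the meet of `Y`. -/
def IsNFilter [Lattice α] (n : ℕ) (F : Set α) : Prop :=
  IsUpset F ∧ ∀ (Y : Finset α) (hY : Y.Nonempty),
    (∀ (X : Finset α) (hX : X.Nonempty), X ⊆ Y → X.card ≤ n → X.inf' hX id ∈ F) →
    Y.inf' hY id ∈ F

/-- A prime upset: `x ⊔ y ∈ F` implies `x ∈ F` or `y ∈ F`. -/
def IsPrimeUpset [Lattice α] (F : Set α) : Prop :=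
  ∀ x y : α, x ⊔ y ∈ F → x ∈ F ∨ y ∈ F

/-- A downward closed subset of a lattice. -/
def IsDownset [Lattice α] (I : Set α) : Prop :=
  ∀ ⦃x y : α⦄, x ∈ I → y ≤ x → y ∈ I

/-- A lattice ideal: a downset closed under binary joins. -/
def IsIdeal [Lattice α] (I : Set α) : Prop :=
  IsDownset I ∧ ∀ x y : α, x ∈ I → y ∈ I → x ⊔ y ∈ I

/-- An `n`-ideal: the order dual notion of an `n`-filter. -/
def IsNIdeal [Lattice α] (n : ℕ) (I : Set α) : Prop :=
  IsDownset I ∧ ∀ (Y : Finset α) (hY : Y.Nonempty),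
    (∀ (X : Finset α) (hX : X.Nonempty), X ⊆ Y → X.card ≤ n → X.sup' hX id ∈ I) →
    Y.sup' hY id ∈ I

variable {L : Type*} [DeMorgan L]

/-- Almost complete upset: `x ∈ F` implies `x ⊓ (y ⊔ ∼y) ∈ F`. -/
def AlmostComplete (F : Set L) : Prop := ∀ x ∈ F, ∀ y : L, x ⊓ (y ⊔ ∼y) ∈ F

/-- Complete upset: almost complete and nonempty. -/
def IsCompleteUpset (F : Set L) : Prop := AlmostComplete F ∧ F.Nonempty

/-- Almost consistent upset: `(x ⊓ ∼x) ⊔ y ∈ F` implies `y ∈ F`. -/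
def AlmostConsistent (F : Set L) : Prop := ∀ x y : L, (x ⊓ ∼x) ⊔ y ∈ F → y ∈ F

/-- Consistent upset: almost consistent and not total. -/
def IsConsistentUpset (F : Set L) : Prop := AlmostConsistent F ∧ F ≠ Set.univ

/-- Classical upset: complete and consistent. -/
def IsClassicalUpset (F : Set L) : Prop := IsCompleteUpset F ∧ IsConsistentUpset F

/-- Kalman upset. -/
def IsKalmanUpset (F : Set L) : Prop :=
  ∀ x y z u : L, ((x ⊓ ∼x) ⊓ z) ⊔ u ∈ F → ((y ⊔ ∼y) ⊓ z) ⊔ u ∈ F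

/-- A homomorphism of De Morgan lattices. -/
def IsDMHom {L M : Type*} [DeMorgan L] [DeMorgan M] (h : L → M) : Prop :=
  (∀ x y : L, h (x ⊓ y) = h x ⊓ h y) ∧ (∀ x y : L, h (x ⊔ y) = h x ⊔ h y) ∧
    ∀ x : L, h (∼x) = ∼(h x)

/-- The filter generated by all elements of the form `x ⊔ ∼x`. -/
def Fcomp (L : Type*) [DeMorgan L] : Set L :=
  {a | ∃ (s : Finset L) (hs : s.Nonempty), s.inf' hs (fun x => x ⊔ ∼x) ≤ a}

/-- The `n`-filter generated by a set. -/
def nFilterGen (n : ℕ) (U : Set L) : Set L :=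
  ⋂₀ {F : Set L | IsNFilter n F ∧ U ⊆ F}

/-- `Comp U`. -/
def CompCl (U : Set L) : Set L := {x | ∃ a ∈ U, ∃ f ∈ Fcomp L, a ⊓ f ≤ x}

/-- `Cons U`. -/
def ConsCl (U : Set L) : Set L := {x | ∃ f ∈ Fcomp L, ∼f ⊔ x ∈ U}

/-- A congruence of De Morgan lattices, as a binary relation. -/
def IsCongruence (θ : L → L → Prop) : Prop :=
  Equivalence θ ∧
  (∀ a b c d : L, θ a b → θ c d → θ (a ⊓ c) (b ⊓ d)) ∧
  (∀ a b c d : L, θ a b → θ c d → θ (a ⊔ c) (b ⊔ d)) ∧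
  ∀ a b : L, θ a b → θ (∼a) (∼b)

end Defs

/-- The four-element De Morgan lattice `DM₁` on `Bool × Bool`. -/
instance : DeMorgan (Bool × Bool) :=
  { (inferInstance : DistribLattice (Bool × Bool)) with
    dneg := fun p => (!p.2, !p.1)
    dneg_dneg := by decide
    dneg_sup := by decide }

/-- Powers of `DM₁`, with componentwise operations. -/
instance {ι : Type*} : DeMorgan (ι → Bool × Bool) :=
  { (inferInstance : DistribLattice (ι → Bool × Bool)) with
    dneg := fun f i => ∼(f i)
    dneg_dneg := fun f => funext fun i => DeMorgan.dneg_dneg (f i)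
    dneg_sup := fun f g => funext fun i => DeMorgan.dneg_sup (f i) (g i) }

/-!
Write `θ_f` for the relation `a ⊓ f = b ⊓ f ∧ ∼f ⊔ a = ∼f ⊔ b`. For each `f` it is a congruence
(negation swaps the two equations), and `θ_f ⊆ θ_g` whenever `g ≤ f`; so `θ`, the union of the
`θ_f` over the filter `Fcomp L`, is a directed union of congruences. Taking
`f = (x ⊔ ∼x) ⊓ (y ⊔ ∼y)` shows that `θ` identifies `x ⊓ ∼x ⊓ (y ⊔ ∼y)` with `x ⊓ ∼x`.
Conversely, if `θ'` is a congruence with Kleene quotient and `g = ⋀ᵢ (xᵢ ⊔ ∼xᵢ)`, then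
`∼g = ⋁ᵢ (xᵢ ⊓ ∼xᵢ)` is `θ'`-related to `∼g ⊓ g`, and this alone forces `θ_g ⊆ θ'`.
-/

section KleeneCongruence

variable {L : Type*} [DeMorgan L]

namespace DeMorgan

theorem dneg_inf (x y : L) : ∼(x ⊓ y) = ∼x ⊔ ∼y := by
  rw [← dneg_dneg (∼x ⊔ ∼y), dneg_sup, dneg_dneg, dneg_dneg]

theorem dneg_anti {x y : L} (h : x ≤ y) : ∼y ≤ ∼x := by
  rw [← sup_eq_right.mpr h, dneg_sup]
  exact inf_le_left

theorem dneg_finset_inf' {ι : Type*} (s : Finset ι) (hs : s.Nonempty) (f : ι → L) :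
    ∼(s.inf' hs f) = s.sup' hs (fun i => ∼(f i)) := by
  induction hs using Finset.Nonempty.cons_induction with
  | singleton a => simp only [Finset.inf'_singleton, Finset.sup'_singleton]
  | cons a s h hs ih => rw [Finset.inf'_cons hs, Finset.sup'_cons hs, dneg_inf, ih]

end DeMorgan

open DeMorgan

theorem sup_dneg_mem_Fcomp (x : L) : x ⊔ ∼x ∈ Fcomp L :=
  ⟨{x}, Finset.singleton_nonempty x, by simp⟩

theorem inf_mem_Fcomp {f g : L} (hf : f ∈ Fcomp L) (hg : g ∈ Fcomp L) : f ⊓ g ∈ Fcomp L := by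
  classical
  obtain ⟨s, hs, hsf⟩ := hf
  obtain ⟨t, ht, htg⟩ := hg
  exact ⟨s ∪ t, hs.mono Finset.subset_union_left,
    le_inf ((Finset.inf'_mono _ Finset.subset_union_left hs).trans hsf)
      ((Finset.inf'_mono _ Finset.subset_union_right ht).trans htg)⟩

def AgreeAt (f a b : L) : Prop := a ⊓ f = b ⊓ f ∧ ∼f ⊔ a = ∼f ⊔ b

namespace AgreeAt

variable {f g a b c d : L}

theorem refl (f a : L) : AgreeAt f a a := ⟨rfl, rfl⟩

theorem symm (h : AgreeAt f a b) : AgreeAt f b a := ⟨h.1.symm, h.2.symm⟩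

theorem trans (h : AgreeAt f a b) (h' : AgreeAt f b c) : AgreeAt f a c :=
  ⟨h.1.trans h'.1, h.2.trans h'.2⟩

theorem inf (h : AgreeAt f a b) (h' : AgreeAt f c d) : AgreeAt f (a ⊓ c) (b ⊓ d) :=
  ⟨by rw [inf_inf_distrib_right, h.1, h'.1, ← inf_inf_distrib_right],
    by rw [sup_inf_left, h.2, h'.2, ← sup_inf_left]⟩

theorem sup (h : AgreeAt f a b) (h' : AgreeAt f c d) : AgreeAt f (a ⊔ c) (b ⊔ d) :=
  ⟨by rw [inf_sup_right, h.1, h'.1, ← inf_sup_right],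
    by rw [sup_sup_distrib_left, h.2, h'.2, ← sup_sup_distrib_left]⟩

theorem dneg (h : AgreeAt f a b) : AgreeAt f (∼a) (∼b) := by
  have h₁ := congrArg DeMorgan.dneg h.2
  have h₂ := congrArg DeMorgan.dneg h.1
  simp only [dneg_sup, dneg_inf, dneg_dneg] at h₁ h₂
  exact ⟨by rw [inf_comm, h₁, inf_comm], by rw [sup_comm, h₂, sup_comm]⟩

theorem mono (hgf : g ≤ f) (h : AgreeAt f a b) : AgreeAt g a b := by
  have hfg : ∼f ≤ ∼g := dneg_anti hgf
  refine ⟨?_, ?_⟩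
  · rw [← inf_eq_right.mpr hgf, ← inf_assoc, h.1, inf_assoc]
  · rw [← sup_eq_left.mpr hfg, sup_assoc, h.2, ← sup_assoc]

end AgreeAt

theorem agreeAt_kleene (x y : L) :
    AgreeAt ((x ⊔ ∼x) ⊓ (y ⊔ ∼y)) (x ⊓ ∼x ⊓ (y ⊔ ∼y)) (x ⊓ ∼x) := by
  have hx : x ⊓ ∼x ≤ x ⊔ ∼x := inf_le_sup
  have hneg : x ⊓ ∼x ≤ ∼((x ⊔ ∼x) ⊓ (y ⊔ ∼y)) := by
    rw [dneg_inf, dneg_sup, dneg_dneg, inf_comm]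
    exact le_sup_left
  refine ⟨?_, ?_⟩
  · rw [inf_eq_left.mpr (inf_le_inf_right _ hx), ← inf_assoc, inf_eq_left.mpr hx]
  · rw [sup_eq_left.mpr (inf_le_left.trans hneg), sup_eq_left.mpr hneg]

/-- `a = (a ⊓ ∼f) ⊔ (a ⊓ b)`, and `a ⊓ ∼f` is congruent to `a ⊓ ∼f ⊓ f = b ⊓ ∼f ⊓ f`. -/
theorem IsCongruence.rel_of_agreeAt {θ : L → L → Prop} (hθ : IsCongruence θ) {f a b : L}
    (hf : θ (∼f ⊓ f) (∼f)) (h : AgreeAt f a b) : θ a b := by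
  obtain ⟨hequiv, hinf, hsup, -⟩ := hθ
  have hcut : ∀ c, θ (c ⊓ ∼f) (c ⊓ (∼f ⊓ f)) := fun c =>
    hinf _ _ _ _ (hequiv.refl c) (hequiv.symm hf)
  have hmid : a ⊓ (∼f ⊓ f) = b ⊓ (∼f ⊓ f) := by
    rw [inf_comm (∼f), ← inf_assoc, h.1, inf_assoc]
  have hdecomp : ∀ {c d}, ∼f ⊔ c = ∼f ⊔ d → c = (c ⊓ ∼f) ⊔ (c ⊓ d) := fun hcd => by
    rw [← inf_sup_left, ← hcd, inf_eq_left.mpr le_sup_right]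
  have hab : θ (a ⊓ ∼f) (b ⊓ ∼f) :=
    hequiv.trans (hcut a) (hmid ▸ hequiv.symm (hcut b))
  have hjoin := hsup _ _ _ _ hab (hequiv.refl (a ⊓ b))
  rwa [← hdecomp h.2, inf_comm a b, ← hdecomp h.2.symm] at hjoin

theorem IsCongruence.rel_dneg_inf_self_of_kleene {θ : L → L → Prop} (hθ : IsCongruence θ)
    (hK : ∀ x y : L, θ (x ⊓ ∼x ⊓ (y ⊔ ∼y)) (x ⊓ ∼x)) (s : Finset L) (hs : s.Nonempty) :
    θ (∼(s.inf' hs fun x => x ⊔ ∼x) ⊓ s.inf' hs fun x => x ⊔ ∼x)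
      (∼(s.inf' hs fun x => x ⊔ ∼x)) := by
  obtain ⟨hequiv, hinf, hsup, -⟩ := hθ
  set g := s.inf' hs fun x => x ⊔ ∼x
  have hneg : ∀ y, θ (∼g ⊓ (y ⊔ ∼y)) (∼g) := fun y => by
    rw [dneg_finset_inf']
    refine Finset.sup'_induction (p := fun c => θ (c ⊓ (y ⊔ ∼y)) c) hs _
      (fun c hc d hd => ?_) fun x _ => ?_
    · rw [inf_sup_right]
      exact hsup _ _ _ _ hc hd
    · rw [dneg_sup, dneg_dneg, inf_comm (∼x)]
      exact hK x y
  refine Finset.inf'_induction (p := fun h => θ (∼g ⊓ h) (∼g)) hs _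
    (fun h hh h' hh' => ?_) fun y _ => hneg y
  rw [← inf_assoc]
  exact hequiv.trans (hinf _ _ _ _ hh (hequiv.refl h')) hh'

def kleeneCong (L : Type*) [DeMorgan L] (a b : L) : Prop := ∃ f ∈ Fcomp L, AgreeAt f a b

namespace kleeneCong

variable {a b c d : L}

theorem refl (a : L) : kleeneCong L a a := ⟨a ⊔ ∼a, sup_dneg_mem_Fcomp a, AgreeAt.refl _ a⟩

theorem symm : kleeneCong L a b → kleeneCong L b a
  | ⟨f, hf, h⟩ => ⟨f, hf, h.symm⟩

theorem of_agreeAt₂ {p q : L} (op : ∀ {f}, AgreeAt f a b → AgreeAt f c d → AgreeAt f p q) :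
    kleeneCong L a b → kleeneCong L c d → kleeneCong L p q
  | ⟨f, hf, h⟩, ⟨g, hg, h'⟩ =>
    ⟨f ⊓ g, inf_mem_Fcomp hf hg, op (h.mono inf_le_left) (h'.mono inf_le_right)⟩

theorem trans : kleeneCong L a b → kleeneCong L b c → kleeneCong L a c :=
  of_agreeAt₂ AgreeAt.trans

theorem inf : kleeneCong L a b → kleeneCong L c d → kleeneCong L (a ⊓ c) (b ⊓ d) :=
  of_agreeAt₂ AgreeAt.inf

theorem sup : kleeneCong L a b → kleeneCong L c d → kleeneCong L (a ⊔ c) (b ⊔ d) :=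
  of_agreeAt₂ AgreeAt.sup

theorem dneg : kleeneCong L a b → kleeneCong L (∼a) (∼b)
  | ⟨f, hf, h⟩ => ⟨f, hf, h.dneg⟩

end kleeneCong

theorem isCongruence_kleeneCong : IsCongruence (kleeneCong L) :=
  ⟨⟨kleeneCong.refl, kleeneCong.symm, kleeneCong.trans⟩, fun _ _ _ _ => kleeneCong.inf,
    fun _ _ _ _ => kleeneCong.sup, fun _ _ => kleeneCong.dneg⟩

theorem kleeneCong_kleene (x y : L) : kleeneCong L (x ⊓ ∼x ⊓ (y ⊔ ∼y)) (x ⊓ ∼x) :=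
  ⟨_, inf_mem_Fcomp (sup_dneg_mem_Fcomp x) (sup_dneg_mem_Fcomp y), agreeAt_kleene x y⟩

theorem IsCongruence.kleeneCong_le {θ : L → L → Prop} (hθ : IsCongruence θ)
    (hK : ∀ x y : L, θ (x ⊓ ∼x ⊓ (y ⊔ ∼y)) (x ⊓ ∼x)) {a b : L} :
    kleeneCong L a b → θ a b
  | ⟨_, ⟨s, hs, hle⟩, h⟩ =>
    hθ.rel_of_agreeAt (hθ.rel_dneg_inf_self_of_kleene hK s hs) (h.mono hle)

end KleeneCongruence

theorem statement7_general {L : Type*} [DeMorgan L] (θ : L → L → Prop)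
    (hθ : ∀ a b : L, θ a b ↔ ∃ f ∈ Fcomp L, a ⊓ f = b ⊓ f ∧ ∼f ⊔ a = ∼f ⊔ b) :
    IsCongruence θ ∧
    (∀ x y : L, θ ((x ⊓ ∼x) ⊓ (y ⊔ ∼y)) (x ⊓ ∼x)) ∧
    (∀ θ' : L → L → Prop, IsCongruence θ' →
      (∀ x y : L, θ' ((x ⊓ ∼x) ⊓ (y ⊔ ∼y)) (x ⊓ ∼x)) →
      ∀ a b : L, θ a b → θ' a b) := by
  obtain rfl : θ = kleeneCong L := funext₂ fun a b => propext (hθ a b)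
  exact ⟨isCongruence_kleeneCong, kleeneCong_kleene,
    fun _ hθ' hK _ _ => hθ'.kleeneCong_le hK⟩

/-- the smallest congruence of a De Morgan lattice whose quotient is a Kleene
lattice. -/
theorem statement7 {L : Type*} [DeMorgan L] [Nonempty L] (θ : L → L → Prop)
    (hθ : ∀ a b : L, θ a b ↔ ∃ f ∈ Fcomp L, a ⊓ f = b ⊓ f ∧ ∼f ⊔ a = ∼f ⊔ b) :
    IsCongruence θ ∧
    (∀ x y : L, θ ((x ⊓ ∼x) ⊓ (y ⊔ ∼y)) (x ⊓ ∼x)) ∧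
    (∀ θ' : L → L → Prop, IsCongruence θ' →
      (∀ x y : L, θ' ((x ⊓ ∼x) ⊓ (y ⊔ ∼y)) (x ⊓ ∼x)) →
      ∀ a b : L, θ a b → θ' a b) :=
  statement7_general θ hθ
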